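/- arXiv:2412.16177 — 3 statements merged into one kernel-verified Lean document; each statement's English description precedes it below -/
import Mathlib

section
/- Let G be a finite group. If there exists an element x ∈ G such that all elements of Sol_G(x) commute pairwise (i.e. for all y, z ∈ Sol_G(x), y·z = z·y), then G is abelian. -/
/-- The solubilizer of `x` in `G`: the set of `y` such that `⟨x, y⟩` is solvable. -/
def solubilizer {G : Type*} [Group G] (x : G) : Set G :=
  {y : G | IsSolvable (Subgroup.closure {x, y})}

section Helpers
variable {G : Type*} [Group G]

private lemma isSolvable_of_mulEquiv {A B : Type*} [Group A] [Group B] (e : A ≃* B)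
    [Group.IsSolvable A] : Group.IsSolvable B :=
  solvable_of_surjective (f := e.toMonoidHom) (fun b => ⟨e.symm b, e.apply_symm_apply b⟩)

private lemma comm_of_mem_closure {s : Set G}
    (hs : ∀ a ∈ s, ∀ b ∈ s, a * b = b * a) :
    ∀ a ∈ Subgroup.closure s, ∀ b ∈ Subgroup.closure s, a * b = b * a := by
  intro a ha b hb
  induction ha, hb using Subgroup.closure_induction₂ with
  | mem x y hx hy => exact hs x hx y hy
  | one_left => simp
  | one_right => simp
  | mul_left x y z hx hy hz h1 h2 => rw [mul_assoc, h2, ← mul_assoc, h1, mul_assoc]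
  | mul_right y z x hy hz hx h1 h2 => rw [← mul_assoc, h1, mul_assoc, h2, ← mul_assoc]
  | inv_left x y hx hy h => exact (Commute.inv_left h).eq
  | inv_right x y hx hy h => exact (Commute.inv_right h).eq

private lemma isSolvable_closure_of_comm {s : Set G}
    (hs : ∀ a ∈ s, ∀ b ∈ s, a * b = b * a) :
    Group.IsSolvable (Subgroup.closure s) := by
  apply isSolvable_of_comm
  rintro ⟨a, ha⟩ ⟨b, hb⟩
  exact Subtype.ext (comm_of_mem_closure hs a ha b hb)

private lemma mem_solubilizer_of_comm {x y : G} (h : x * y = y * x) : y ∈ solubilizer x := by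
  apply isSolvable_closure_of_comm
  intro a ha b hb
  rcases ha with rfl | ha <;> rcases hb with rfl | hb <;>
    first
      | rfl
      | (rw [Set.mem_singleton_iff] at *; subst_vars; first | rfl | exact h | exact h.symm)

private lemma self_mem_solubilizer (x : G) : x ∈ solubilizer x :=
  mem_solubilizer_of_comm rfl


/-- transfer the hypothesis to a subgroup containing `x` -/
private lemma hyp_subgroup {x : G}
    (hcomm : ∀ y ∈ solubilizer x, ∀ z ∈ solubilizer x, y * z = z * y)
    (H : Subgroup G) (hxH : x ∈ H) :
    ∀ y ∈ solubilizer (⟨x, hxH⟩ : H), ∀ z ∈ solubilizer (⟨x, hxH⟩ : H), y * z = z * y := by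
  have key : ∀ y : H, y ∈ solubilizer (⟨x, hxH⟩ : H) → (y : G) ∈ solubilizer x := by
    intro y hy
    have hmap : (Subgroup.closure {(⟨x, hxH⟩ : H), y}).map H.subtype
        = Subgroup.closure {x, (y : G)} := by
      rw [MonoidHom.map_closure, Set.image_pair]
      rfl
    have : Group.IsSolvable ((Subgroup.closure {(⟨x, hxH⟩ : H), y}).map H.subtype) := by
      haveI : Group.IsSolvable (Subgroup.closure {(⟨x, hxH⟩ : H), y}) := hy
      exact isSolvable_of_mulEquiv
        (Subgroup.equivMapOfInjective _ H.subtype H.subtype_injective)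
    rw [hmap] at this
    exact this
  intro y hy z hz
  exact Subtype.ext (hcomm _ (key y hy) _ (key z hz))

/-- transfer the hypothesis to a quotient by a central (normal) subgroup -/
private lemma hyp_quotient {x : G} (N : Subgroup G) [N.Normal]
    (hN : N ≤ Subgroup.center G)
    (hcomm : ∀ y ∈ solubilizer x, ∀ z ∈ solubilizer x, y * z = z * y) :
    ∀ y ∈ solubilizer ((x : G ⧸ N)), ∀ z ∈ solubilizer ((x : G ⧸ N)), y * z = z * y := by
  have key : ∀ y : G, ((y : G ⧸ N)) ∈ solubilizer ((x : G ⧸ N)) → y ∈ solubilizer x := by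
    intro y hy
    set Q := Subgroup.closure {(x : G ⧸ N), (y : G ⧸ N)} with hQ
    haveI hQs : Group.IsSolvable Q := hy
    set H : Subgroup G := Q.comap (QuotientGroup.mk' N) with hH
    have hxy : Subgroup.closure {x, y} ≤ H := by
      rw [Subgroup.closure_le]
      rintro a (rfl | ha)
      · exact Subgroup.subset_closure (Set.mem_insert _ _)
      · rw [Set.mem_singleton_iff] at ha; subst ha
        exact Subgroup.subset_closure (Set.mem_insert_iff.mpr (Or.inr rfl))
    -- H is solvable: central kernel, solvable image
    haveI : Group.IsSolvable H := by
      have hker : ((QuotientGroup.mk' N).comp H.subtype).ker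
          ≤ ((N.subgroupOf H).subtype).range := by
        rw [Subgroup.range_subtype]
        intro g hg
        simp only [MonoidHom.mem_ker, MonoidHom.comp_apply, QuotientGroup.mk'_apply] at hg
        have : (g : G) ∈ N := (QuotientGroup.eq_one_iff _).mp hg
        exact this
      haveI : Group.IsSolvable (N.subgroupOf H) := by
        apply isSolvable_of_comm
        rintro ⟨⟨a, haH⟩, haN⟩ ⟨⟨b, hbH⟩, hbN⟩
        have : a * b = b * a := by
          have := Subgroup.mem_center_iff.mp (hN haN) b
          exact this.symm
        exact Subtype.ext (Subtype.ext this)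
      set f := ((QuotientGroup.mk' N).comp H.subtype).codRestrict Q (fun g => g.2)
      have hkerf : f.ker ≤ ((N.subgroupOf H).subtype).range := by
        intro g hg
        apply hker
        have : f g = 1 := hg
        simp only [MonoidHom.mem_ker]
        have := congrArg (Subtype.val) this
        exact this
      exact solvable_of_ker_le_range (N.subgroupOf H).subtype f hkerf
    have : Group.IsSolvable (Subgroup.closure {x, y}) := by
      exact isSolvable_of_mulEquiv (Subgroup.subgroupOfEquivOfLe hxy)
    exact this
  intro y hy z hz
  obtain ⟨a, rfl⟩ := QuotientGroup.mk_surjective y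
  obtain ⟨b, rfl⟩ := QuotientGroup.mk_surjective z
  have := hcomm _ (key a hy) _ (key b hz)
  rw [← QuotientGroup.mk_mul, ← QuotientGroup.mk_mul, this]

end Helpers

section ConjHelpers
variable {G : Type*} [Group G]

open scoped Pointwise

private lemma conj_centralizer_eq (g a : G) :
    MulAut.conj g • Subgroup.centralizer {a} = Subgroup.centralizer {g * a * g⁻¹} := by
  ext y
  rw [Subgroup.mem_pointwise_smul_iff_inv_smul_mem]
  simp only [MulAut.smul_def, MulAut.conj_inv_apply, Subgroup.mem_centralizer_singleton_iff]
  constructor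
  · intro h
    calc y * (g * a * g⁻¹) = g * (g⁻¹ * y * g * a) * g⁻¹ := by group
    _ = g * (a * (g⁻¹ * y * g)) * g⁻¹ := by rw [h]
    _ = g * a * g⁻¹ * y := by group
  · intro h
    calc g⁻¹ * y * g * a = g⁻¹ * (y * (g * a * g⁻¹)) * g := by group
    _ = g⁻¹ * (g * a * g⁻¹ * y) * g := by rw [h]
    _ = a * (g⁻¹ * y * g) := by group

private lemma conj_card_eq (g : G) (H : Subgroup G) :
    Nat.card (MulAut.conj g • H : Subgroup G) = Nat.card H :=
  (Nat.card_congr (Subgroup.equivSMul (MulAut.conj g) H).toEquiv).symm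

private lemma eq_of_conj_self {g : G} {H : Subgroup G}
    (h : MulAut.conj g • H = H) : g ∈ Subgroup.normalizer (H : Set G) := by
  rw [Subgroup.mem_normalizer_iff]
  intro h'
  constructor
  · intro hh
    have := Subgroup.smul_mem_pointwise_smul h' (MulAut.conj g) H hh
    rwa [h, MulAut.smul_def, MulAut.conj_apply] at this
  · intro hh
    have h2 : H = (MulAut.conj g)⁻¹ • H := by rw [eq_inv_smul_iff, h]
    rw [h2, Subgroup.mem_pointwise_smul_iff_inv_smul_mem]
    simpa using hh

private lemma smul_eq_map' (a : MulAut G) (H : Subgroup G) :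
    a • H = H.map a.toMonoidHom := rfl

private lemma conj_normalizer_eq (a : MulAut G) (H : Subgroup G) :
    Subgroup.normalizer ((a • H : Subgroup G) : Set G) = a • Subgroup.normalizer (H : Set G) := by
  rw [smul_eq_map', smul_eq_map', Subgroup.map_equiv_normalizer_eq]

private lemma isPGroup_zpowers_of_pow {H : Type*} [Group H] {p k : ℕ} (hp : p.Prime) {g : H}
    (h : g ^ p ^ k = 1) : IsPGroup p (Subgroup.zpowers g) := by
  obtain ⟨j, _, hje⟩ := (Nat.dvd_prime_pow hp).mp (orderOf_dvd_of_pow_eq_one h)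
  exact IsPGroup.of_card (by rw [Nat.card_zpowers, hje])

end ConjHelpers

section Main
open scoped Pointwise
open scoped commutatorElement
universe u

private lemma key : ∀ (n : ℕ) (G : Type u) (_ : Group G) (_ : Finite G), Nat.card G ≤ n →
    (∃ x : G, ∀ y ∈ solubilizer x, ∀ z ∈ solubilizer x, y * z = z * y) →
    ∀ a b : G, a * b = b * a := by
  intro n
  induction n with
  | zero =>
    intro G _ _ hcard _
    have := Nat.card_pos (α := G)
    omega
  | succ n IH =>
    rintro G _ _ hcard ⟨x, hcomm⟩
    by_cases hsolv : Group.IsSolvable G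
    · intro a b
      have hmem : ∀ y : G, y ∈ solubilizer x := fun y =>
        inferInstanceAs (Group.IsSolvable (Subgroup.closure {x, y}))
      exact hcomm a (hmem a) b (hmem b)
    exfalso
    -- the nonsolvable case: derive a contradiction
    set A : Subgroup G := Subgroup.centralizer {x} with hA
    have mem_A_iff : ∀ y : G, y ∈ A ↔ y ∈ solubilizer x := by
      intro y
      constructor
      · intro hy
        exact mem_solubilizer_of_comm
          ((Subgroup.mem_centralizer_singleton_iff.mp hy).symm)
      · intro hy
        exact Subgroup.mem_centralizer_singleton_iff.mpr
          (hcomm y hy x (self_mem_solubilizer x))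
    have hxA : x ∈ A := (mem_A_iff x).mpr (self_mem_solubilizer x)
    have hAcomm : ∀ a ∈ A, ∀ b ∈ A, a * b = b * a := fun a ha b hb =>
      hcomm a ((mem_A_iff a).mp ha) b ((mem_A_iff b).mp hb)
    have hx1 : x ≠ 1 := by
      rintro rfl
      refine hsolv (isSolvable_of_comm fun a b => ?_)
      exact hcomm a (mem_solubilizer_of_comm (by group)) b (mem_solubilizer_of_comm (by group))
    -- every proper subgroup containing x is contained in A
    have subgroup_le_A : ∀ H : Subgroup G, H ≠ ⊤ → x ∈ H → H ≤ A := by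
      intro H hHtop hxH y hyH
      have hlt : Nat.card H < Nat.card G := by
        refine lt_of_le_of_ne (Nat.le_of_dvd Nat.card_pos H.card_subgroup_dvd_card) ?_
        intro h
        exact hHtop ((Subgroup.card_eq_iff_eq_top H).mp h)
      have habH := IH H inferInstance inferInstance (by omega)
        ⟨⟨x, hxH⟩, hyp_subgroup hcomm H hxH⟩
      have h0 := habH ⟨x, hxH⟩ ⟨y, hyH⟩
      have hxy : x * y = y * x := by simpa using Subtype.ext_iff.mp h0
      exact (mem_A_iff y).mpr (mem_solubilizer_of_comm hxy)
    -- the center is trivial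
    have hZ : Subgroup.center G = ⊥ := by
      by_contra hZ
      have hZtop : Subgroup.center G ≠ ⊤ := by
        intro h
        refine hsolv (isSolvable_of_comm fun a b => ?_)
        exact (Subgroup.mem_center_iff.mp (h ▸ Subgroup.mem_top a) b).symm
      haveI : Group.IsSolvable (G ⧸ Subgroup.center G) := by
        have hlt : Nat.card (G ⧸ Subgroup.center G) < Nat.card G := by
          have h1 := Subgroup.card_mul_index (Subgroup.center G)
          rw [Subgroup.index_eq_card] at h1
          have h2 : 1 < Nat.card (Subgroup.center G) :=
            (Subgroup.one_lt_card_iff_ne_bot _).mpr hZ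
          have h3 : 0 < Nat.card (G ⧸ Subgroup.center G) := Nat.card_pos
          nlinarith
        have habQ := IH (G ⧸ Subgroup.center G) inferInstance inferInstance (by omega)
          ⟨(x : G ⧸ Subgroup.center G),
            hyp_quotient (Subgroup.center G) le_rfl hcomm⟩
        exact isSolvable_of_comm habQ
      haveI : Group.IsSolvable (Subgroup.center G) :=
        isSolvable_of_comm fun ⟨a, ha⟩ ⟨b, hb⟩ =>
          Subtype.ext ((Subgroup.mem_center_iff.mp ha b).symm)
      exact hsolv (solvable_of_ker_le_range (Subgroup.center G).subtype
        (QuotientGroup.mk' (Subgroup.center G))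
        (by rw [QuotientGroup.ker_mk', Subgroup.range_subtype]))

    have hAne : A ≠ ⊤ := by
      intro h
      apply hx1
      have hxc : x ∈ Subgroup.center G := by
        rw [Subgroup.mem_center_iff]
        intro g
        exact Subgroup.mem_centralizer_singleton_iff.mp (h.ge (Subgroup.mem_top g))
      rwa [hZ, Subgroup.mem_bot] at hxc
    have htop : ∀ y : G, y ∉ A → Subgroup.closure {x, y} = ⊤ := by
      intro y hy
      by_contra h
      exact hy (subgroup_le_A _ h (Subgroup.subset_closure (Set.mem_insert _ _))
        (Subgroup.subset_closure (by simp)))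
    have hCent : ∀ a : G, a ∈ A → a ≠ 1 → Subgroup.centralizer {a} = A := by
      intro a haA ha1
      apply le_antisymm
      · apply subgroup_le_A
        · intro h
          apply ha1
          have hac : a ∈ Subgroup.center G := by
            rw [Subgroup.mem_center_iff]
            intro g
            exact Subgroup.mem_centralizer_singleton_iff.mp (h.ge (Subgroup.mem_top g))
          rwa [hZ, Subgroup.mem_bot] at hac
        · exact Subgroup.mem_centralizer_singleton_iff.mpr (hAcomm x hxA a haA)
      · intro b hb
        exact Subgroup.mem_centralizer_singleton_iff.mpr (hAcomm b hb a haA)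
    have hNA : Subgroup.normalizer (A : Set G) = A := by
      refine le_antisymm ?_ Subgroup.le_normalizer
      intro g hg
      by_contra hgA
      have h1 : Subgroup.normalizer (A : Set G) = ⊤ := by
        rw [← top_le_iff, ← htop g hgA, Subgroup.closure_le]
        rintro a (rfl | ha)
        · exact Subgroup.le_normalizer hxA
        · rw [Set.mem_singleton_iff] at ha; subst ha; exact hg
      haveI hAnormal : A.Normal := Subgroup.normalizer_eq_top_iff.mp h1
      haveI : Group.IsSolvable (G ⧸ A) := by
        apply isSolvable_of_comm
        have hmapc := MonoidHom.map_closure (QuotientGroup.mk' A) {x, g}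
        rw [htop g hgA, Set.image_pair] at hmapc
        have hsurj : Subgroup.closure
            ({((x : G ⧸ A)), ((g : G ⧸ A))} : Set (G ⧸ A)) = ⊤ := by
          rw [show ((x : G ⧸ A)) = QuotientGroup.mk' A x from rfl,
            show ((g : G ⧸ A)) = QuotientGroup.mk' A g from rfl, ← hmapc]
          exact Subgroup.map_top_of_surjective _ (QuotientGroup.mk'_surjective A)
        have hx0 : ((x : G ⧸ A)) = 1 := (QuotientGroup.eq_one_iff x).mpr hxA
        have hpc : ∀ s ∈ ({((x : G ⧸ A)), ((g : G ⧸ A))} : Set (G ⧸ A)),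
            ∀ t ∈ ({((x : G ⧸ A)), ((g : G ⧸ A))} : Set (G ⧸ A)), s * t = t * s := by
          rintro s (rfl | hs) t (rfl | ht)
          · rfl
          · rw [Set.mem_singleton_iff] at ht; subst ht; rw [hx0, one_mul, mul_one]
          · rw [Set.mem_singleton_iff] at hs; subst hs; rw [hx0, one_mul, mul_one]
          · rw [Set.mem_singleton_iff] at hs ht; subst hs; subst ht; rfl
        intro u v
        exact comm_of_mem_closure hpc u (hsurj ▸ Subgroup.mem_top u)
          v (hsurj ▸ Subgroup.mem_top v)
      haveI : Group.IsSolvable A :=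
        isSolvable_of_comm fun ⟨a, ha⟩ ⟨b, hb⟩ => Subtype.ext (hAcomm a ha b hb)
      exact hsolv (solvable_of_ker_le_range A.subtype (QuotientGroup.mk' A)
        (by rw [QuotientGroup.ker_mk', Subgroup.range_subtype]))

    have hCentConj : ∀ (g a : G), a ∈ A → a ≠ 1 →
        Subgroup.centralizer {g * a * g⁻¹} = MulAut.conj g • A := by
      intro g a ha ha1
      rw [← conj_centralizer_eq, hCent a ha ha1]
    have hNormStep : ∀ (g a : G), a ∈ A → a ≠ 1 → g * a * g⁻¹ ∈ A → g ∈ A := by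
      intro g a ha ha1 hconj
      have h1 : g * a * g⁻¹ ≠ 1 := by
        intro h
        apply ha1
        have h2 : a = g⁻¹ * (g * a * g⁻¹) * g := by group
        rw [h] at h2
        simpa using h2
      have h4 : MulAut.conj g • A = A := by
        rw [← hCentConj g a ha ha1, hCent _ hconj h1]
      rw [← hNA]
      exact eq_of_conj_self h4
    have hAcomm' : ∀ a b : ↥A, a * b = b * a := fun a b =>
      Subtype.ext (hAcomm a a.2 b b.2)
    have hNormalA : ∀ S : Subgroup ↥A, S.Normal := by
      intro S
      constructor
      intro s hs g
      have : g * s * g⁻¹ = s := by rw [hAcomm' g s]; group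
      rwa [this]
    -- Step: for each prime p dividing |A|, a Sylow p-subgroup inside A and
    -- a normal p-complement.
    have hstep : ∀ p : ℕ, p.Prime → p ∣ Nat.card A →
        (∃ P : Sylow p G, (P : Subgroup G) ≤ A) ∧
        (∃ N : Subgroup G, N.Normal ∧ (∀ y : G, ¬ p ∣ orderOf y → y ∈ N) ∧
          (¬ p ∣ Nat.card N) ∧ (∀ a b : G, ⁅a, b⁆ ∈ N)) := by
      intro p hp hpm
      haveI : Fact p.Prime := ⟨hp⟩
      obtain ⟨PA⟩ : Nonempty (Sylow p ↥A) := inferInstance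
      set Q : Subgroup G := (PA : Subgroup ↥A).map A.subtype with hQdef
      have hQA : Q ≤ A := by
        rintro y ⟨⟨a, haA⟩, -, rfl⟩
        exact haA
      have hcardQ : Nat.card Q = Nat.card PA :=
        (Nat.card_congr (Subgroup.equivMapOfInjective _ A.subtype
          A.subtype_injective).toEquiv).symm
      have hQne1 : ∃ a ∈ Q, a ≠ 1 := by
        rcases Q.bot_or_exists_ne_one with h | h
        · exfalso
          have h1 : Nat.card PA = p ^ (Nat.card ↥A).factorization p :=
            PA.card_eq_multiplicity
          have h2 : 0 < (Nat.card ↥A).factorization p :=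
            Nat.Prime.factorization_pos_of_dvd hp Nat.card_pos.ne' hpm
          have h3 : Nat.card Q = 1 := by rw [h, Subgroup.card_bot]
          rw [hcardQ, h1] at h3
          have := Nat.one_lt_pow h2.ne' hp.one_lt
          omega
        · exact h
      have hQp : IsPGroup p Q := PA.isPGroup'.map A.subtype
      obtain ⟨P, hQP⟩ := hQp.exists_le_sylow
      have hQeq : Q = (P : Subgroup G) := by
        by_contra hne
        have hltQ : Q.subgroupOf (P : Subgroup G) ≠ ⊤ := by
          intro h
          exact hne (le_antisymm hQP (Subgroup.subgroupOf_eq_top.mp h))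
        haveI : Group.IsNilpotent ↥(P : Subgroup G) := P.isPGroup'.isNilpotent
        have hgrow := normalizerCondition_of_isNilpotent (G := ↥(P : Subgroup G))
          _ (lt_top_iff_ne_top.mpr hltQ)
        obtain ⟨g', hg'n, hg'q⟩ := SetLike.exists_of_lt hgrow
        obtain ⟨a, haQ, ha1⟩ := hQne1
        have haP : a ∈ (P : Subgroup G) := hQP haQ
        have hconj : (g' : G) * a * (g' : G)⁻¹ ∈ Q := by
          have h5 := (Subgroup.mem_normalizer_iff.mp hg'n ⟨a, haP⟩).mp
            (by simpa [Subgroup.mem_subgroupOf] using haQ)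
          simpa [Subgroup.mem_subgroupOf] using h5
        have hgA : (g' : G) ∈ A := hNormStep _ a (hQA haQ) ha1 (hQA hconj)
        obtain ⟨k, hk⟩ := P.isPGroup' g'
        have hkG : (g' : G) ^ p ^ k = 1 := by
          have := congrArg (Subtype.val) hk
          simpa using this
        set gA : ↥A := ⟨(g' : G), hgA⟩ with hgAdef
        have hgApow : gA ^ p ^ k = 1 := by
          apply Subtype.ext
          simpa using hkG
        have hzp : IsPGroup p (Subgroup.zpowers gA) := isPGroup_zpowers_of_pow hp hgApow
        haveI := hNormalA (Subgroup.zpowers gA)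
        have hsup : IsPGroup p (((PA : Subgroup ↥A) ⊔ Subgroup.zpowers gA : Subgroup ↥A)) :=
          PA.isPGroup'.to_sup_of_normal_right hzp
        have heq : (PA : Subgroup ↥A) ⊔ Subgroup.zpowers gA = (PA : Subgroup ↥A) :=
          PA.3 hsup le_sup_left
        have hgPA : gA ∈ (PA : Subgroup ↥A) := by
          rw [← heq]
          exact Subgroup.mem_sup_right (Subgroup.mem_zpowers gA)
        apply hg'q
        have : (g' : G) ∈ Q := ⟨gA, hgPA, rfl⟩
        simpa [Subgroup.mem_subgroupOf] using this
      have hPA : (P : Subgroup G) ≤ A := hQeq ▸ hQA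
      refine ⟨⟨P, hPA⟩, ?_⟩
      -- Burnside transfer
      have hPbot : ∃ a ∈ (P : Subgroup G), a ≠ 1 := by
        obtain ⟨a, haQ, ha1⟩ := hQne1
        exact ⟨a, hQeq ▸ haQ, ha1⟩
      have hnormP : Subgroup.normalizer ((P : Subgroup G) : Set G) ≤ Subgroup.centralizer (P : Set G) := by
        intro g hg
        obtain ⟨a, haP, ha1⟩ := hPbot
        have hconj : g * a * g⁻¹ ∈ (P : Subgroup G) :=
          (Subgroup.mem_normalizer_iff.mp hg a).mp haP
        have hgA : g ∈ A := hNormStep g a (hPA haP) ha1 (hPA hconj)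
        rw [Subgroup.mem_centralizer_iff]
        intro b hb
        exact hAcomm b (hPA hb) g hgA
      set f := MonoidHom.transferSylow P hnormP with hfdef
      refine ⟨f.ker, inferInstance, ?_, ?_, ?_⟩
      · intro y hy
        have hcompl := MonoidHom.ker_transferSylow_isComplement' P hnormP
        have hidx : (f.ker).index = Nat.card P := hcompl.symm.index_eq_card
        rw [← QuotientGroup.eq_one_iff]
        have h1 : orderOf ((y : G ⧸ f.ker)) ∣ orderOf y :=
          orderOf_map_dvd (QuotientGroup.mk' f.ker) y
        have h2 : orderOf ((y : G ⧸ f.ker)) ∣ Nat.card P := by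
          rw [← hidx, Subgroup.index_eq_card]
          exact orderOf_dvd_natCard _
        obtain ⟨kp, hkp⟩ := IsPGroup.iff_card.mp P.isPGroup'
        rw [hkp] at h2
        have h3 : orderOf ((y : G ⧸ f.ker)) ∣ Nat.gcd (p ^ kp) (orderOf y) :=
          Nat.dvd_gcd h2 h1
        have h4 : Nat.Coprime (p ^ kp) (orderOf y) :=
          Nat.Coprime.pow_left _ ((Nat.Prime.coprime_iff_not_dvd hp).mpr hy)
        have h5 : orderOf ((y : G ⧸ f.ker)) ∣ 1 := h4 ▸ h3
        exact orderOf_eq_one_iff.mp (Nat.dvd_one.mp h5)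
      · exact MonoidHom.not_dvd_card_ker_transferSylow P hnormP
      · intro a b
        have hPcomm : ∀ u v : ↥(P : Subgroup G), u * v = v * u := fun u v =>
          Subtype.ext (hAcomm u (hPA u.2) v (hPA v.2))
        have h1 : f ⁅a, b⁆ = 1 := by
          simp only [commutatorElement_def, map_mul, map_inv]
          rw [hPcomm (f a) (f b)]
          group
        exact h1

    set m := Nat.card A with hm
    have hm0 : m ≠ 0 := Nat.card_pos.ne'
    -- coprimality of m with the index
    set nn := A.index with hnn
    have hmn : m * nn = Nat.card G := Subgroup.card_mul_index A
    have hcop : ∀ p ∈ m.primeFactors, ¬ p ∣ nn := by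
      intro p hpmem hpn
      have hp : p.Prime := Nat.prime_of_mem_primeFactors hpmem
      haveI : Fact p.Prime := ⟨hp⟩
      obtain ⟨⟨P, hPA⟩, -⟩ := hstep p hp (Nat.dvd_of_mem_primeFactors hpmem)
      set ff := (Nat.card G).factorization p with hff
      have h1 : Nat.card P = p ^ ff := P.card_eq_multiplicity
      have h2 : Nat.card P ∣ m := Subgroup.card_dvd_of_le hPA
      have h3 : p ^ (ff + 1) ∣ Nat.card G := by
        rw [pow_succ, ← hmn]
        exact mul_dvd_mul (h1 ▸ h2) hpn
      have h4 := (Nat.Prime.pow_dvd_iff_le_factorization hp Nat.card_pos.ne').mp h3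
      omega
    -- the normal complement K
    have hNexists : ∀ p ∈ m.primeFactors, ∃ N : Subgroup G, N.Normal ∧
        (∀ y : G, ¬ p ∣ orderOf y → y ∈ N) ∧ (¬ p ∣ Nat.card N) ∧
        (∀ a b : G, ⁅a, b⁆ ∈ N) := fun p hp =>
      (hstep p (Nat.prime_of_mem_primeFactors hp) (Nat.dvd_of_mem_primeFactors hp)).2
    choose NS hNSnormal hNSmem hNSnd hNScomm using hNexists
    set K : Subgroup G := ⨅ (p : ℕ) (h : p ∈ m.primeFactors), NS p h with hK
    have hmemK : ∀ y : G, y ∈ K ↔ ∀ (p) (h : p ∈ m.primeFactors), y ∈ NS p h := by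
      intro y
      simp [hK, Subgroup.mem_iInf]
    haveI hKnormal : K.Normal := by
      constructor
      intro k hk g
      rw [hmemK] at hk ⊢
      intro p hp
      exact (hNSnormal p hp).conj_mem k (hk p hp) g
    have hKmem : ∀ y : G, (∀ p ∈ m.primeFactors, ¬ p ∣ orderOf y) → y ∈ K := by
      intro y hy
      rw [hmemK]
      intro p hp
      exact hNSmem p hp y (hy p hp)
    have hKord : ∀ k ∈ K, ∀ p ∈ m.primeFactors, ¬ p ∣ orderOf k := by
      intro k hk p hp hdvd
      have hpp : p.Prime := Nat.prime_of_mem_primeFactors hp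
      have hordk : orderOf k ≠ 0 := (orderOf_pos k).ne'
      set t := k ^ (orderOf k / p ^ (orderOf k).factorization p) with ht
      have hv : 0 < (orderOf k).factorization p :=
        hpp.factorization_pos_of_dvd hordk hdvd
      have hordt : orderOf t = p ^ (orderOf k).factorization p := by
        rw [ht, orderOf_pow, Nat.gcd_eq_right (Nat.ordCompl_dvd (orderOf k) p),
          Nat.div_div_self (Nat.ordProj_dvd (orderOf k) p) hordk]
      have htN : t ∈ NS p hp := Subgroup.pow_mem _ ((hmemK k).mp hk p hp) _
      have h5 : orderOf t ∣ Nat.card (NS p hp) := Subgroup.orderOf_dvd_natCard _ htN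
      rw [hordt] at h5
      exact hNSnd p hp (dvd_trans (dvd_pow_self p hv.ne') h5)
    have hKA : ∀ k ∈ K, k ∈ A → k = 1 := by
      intro k hkK hkA
      by_contra hk1
      have h1 : orderOf k ∣ m := Subgroup.orderOf_dvd_natCard A hkA
      have h2 : orderOf k ≠ 1 := by
        intro h
        exact hk1 (orderOf_eq_one_iff.mp h)
      set p := (orderOf k).minFac with hp
      have hpp : p.Prime := Nat.minFac_prime h2
      have hpmem : p ∈ m.primeFactors :=
        Nat.mem_primeFactors.mpr ⟨hpp, dvd_trans (Nat.minFac_dvd _) h1, hm0⟩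
      exact hKord k hkK p hpmem (Nat.minFac_dvd _)
    -- K is nontrivial
    have hnn1 : 1 < nn := by
      have h0 : nn ≠ 0 := Subgroup.index_ne_zero_of_finite
      have h1 : nn ≠ 1 := by
        intro h
        exact hAne (Subgroup.index_eq_one.mp h)
      omega
    have hKbot : K ≠ ⊥ := by
      set q := nn.minFac with hqdef
      have hq : q.Prime := Nat.minFac_prime (by omega)
      have hqm : ¬ q ∣ m := by
        intro h
        exact hcop q (Nat.mem_primeFactors.mpr ⟨hq, h, hm0⟩) (Nat.minFac_dvd _)
      haveI : Fact q.Prime := ⟨hq⟩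
      haveI := Fintype.ofFinite G
      have hqcard : q ∣ Fintype.card G := by
        have : q ∣ Nat.card G := dvd_trans (Nat.minFac_dvd _) A.index_dvd_card
        rwa [Nat.card_eq_fintype_card] at this
      obtain ⟨y, hy⟩ := exists_prime_orderOf_dvd_card q hqcard
      have hyK : y ∈ K := by
        apply hKmem
        intro p hp hpdvd
        rw [hy] at hpdvd
        have : p = q :=
          ((Nat.prime_dvd_prime_iff_eq (Nat.prime_of_mem_primeFactors hp) hq).mp hpdvd)
        subst this
        exact hqm (Nat.dvd_of_mem_primeFactors hp)
      intro hKeq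
      rw [hKeq, Subgroup.mem_bot] at hyK
      rw [hyK, orderOf_one] at hy
      exact hq.one_lt.ne hy
    -- K is not solvable; quotient by K is abelian
    have hKns : ¬ Group.IsSolvable K := by
      intro hKs
      apply hsolv
      haveI : Group.IsSolvable (G ⧸ K) := by
        apply isSolvable_of_comm
        intro a' b'
        obtain ⟨a, rfl⟩ := QuotientGroup.mk_surjective a'
        obtain ⟨b, rfl⟩ := QuotientGroup.mk_surjective b'
        rw [← QuotientGroup.mk_mul, ← QuotientGroup.mk_mul]
        apply (QuotientGroup.eq (s := K)).mpr
        have h1 : (a * b)⁻¹ * (b * a) = ⁅b⁻¹, a⁻¹⁆ := by group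
        rw [h1]
        rw [hmemK]
        intro p hp
        exact hNScomm p hp b⁻¹ a⁻¹
      exact solvable_of_ker_le_range K.subtype (QuotientGroup.mk' K)
        (by rw [QuotientGroup.ker_mk', Subgroup.range_subtype])
    -- x together with K generates G
    have hxK : x ∉ K := by
      intro h
      exact hx1 (hKA x h hxA)
    have hsupxK : Subgroup.zpowers x ⊔ K = ⊤ := by
      obtain ⟨k₀, hk₀K, hk₀1⟩ := K.bot_or_exists_ne_one.resolve_left hKbot
      have hk₀A : k₀ ∉ A := fun h => hk₀1 (hKA k₀ hk₀K h)
      rw [← top_le_iff, ← htop k₀ hk₀A, Subgroup.closure_le]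
      rintro a (rfl | ha)
      · exact Subgroup.mem_sup_left (Subgroup.mem_zpowers a)
      · rw [Set.mem_singleton_iff] at ha; subst ha
        exact Subgroup.mem_sup_right hk₀K
    have hQtop : Subgroup.zpowers ((x : G ⧸ K)) = ⊤ := by
      have h1 := Subgroup.map_sup (Subgroup.zpowers x) K (QuotientGroup.mk' K)
      rw [hsupxK] at h1
      rw [Subgroup.map_top_of_surjective _ (QuotientGroup.mk'_surjective K)] at h1
      rw [MonoidHom.map_zpowers] at h1
      have h2 : K.map (QuotientGroup.mk' K) = ⊥ :=
        (Subgroup.map_eq_bot_iff K).mpr (le_of_eq (QuotientGroup.ker_mk' K).symm)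
      rw [h2, sup_bot_eq] at h1
      exact h1.symm
    -- index of K equals m
    have hcKm : Nat.Coprime (Nat.card K) m := by
      rw [Nat.coprime_comm]
      by_contra h
      set d := Nat.gcd m (Nat.card K) with hd
      have hd1 : d ≠ 1 := h
      have hd0 : d ≠ 0 := by
        intro h0
        have hdd : d ∣ m := by rw [hd]; exact Nat.gcd_dvd_left _ _
        rw [h0] at hdd
        exact hm0 (Nat.eq_zero_of_zero_dvd hdd)
      set p := d.minFac with hpd
      have hpp : p.Prime := Nat.minFac_prime hd1
      have hpm : p ∣ m := dvd_trans (Nat.minFac_dvd d) (Nat.gcd_dvd_left _ _)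
      have hpK : p ∣ Nat.card K := dvd_trans (Nat.minFac_dvd d) (Nat.gcd_dvd_right _ _)
      haveI : Fact p.Prime := ⟨hpp⟩
      haveI := Fintype.ofFinite ↥K
      obtain ⟨k', hk'⟩ := exists_prime_orderOf_dvd_card (G := ↥K) p
        (by rwa [← Nat.card_eq_fintype_card])
      have hordk : orderOf ((k' : G)) = p := by rw [Subgroup.orderOf_coe, hk']
      exact hKord (k' : G) k'.2 p (Nat.mem_primeFactors.mpr ⟨hpp, hpm, hm0⟩)
        (hordk ▸ dvd_rfl)
    have hKidx : K.index = m := by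
      have hdvd1 : K.index ∣ m := by
        have h1 : orderOf ((x : G ⧸ K)) = K.index := by
          rw [← Nat.card_zpowers, hQtop, Subgroup.card_top, ← Subgroup.index_eq_card]
        have h2 : orderOf ((x : G ⧸ K)) ∣ orderOf x :=
          orderOf_map_dvd (QuotientGroup.mk' K) x
        have h3 : orderOf x ∣ m := Subgroup.orderOf_dvd_natCard A hxA
        rw [h1] at h2
        exact dvd_trans h2 h3
      have hdvd2 : m ∣ K.index := by
        have h1 : Nat.card K ∣ nn := by
          apply Nat.Coprime.dvd_of_dvd_mul_left hcKm
          rw [hmn]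
          exact K.card_subgroup_dvd_card
        obtain ⟨t, ht⟩ := h1
        have h2 : Nat.card K * K.index = m * nn := by
          rw [Subgroup.card_mul_index, hmn]
        rw [ht] at h2
        have h3 : Nat.card K ≠ 0 := Nat.card_pos.ne'
        have h4 : K.index = m * t := by
          have : Nat.card K * K.index = Nat.card K * (m * t) := by ring_nf; rw [h2]; ring
          exact Nat.eq_of_mul_eq_mul_left (Nat.pos_of_ne_zero h3) this
        exact Dvd.intro t h4.symm
      exact Nat.dvd_antisymm hdvd1 hdvd2

    have hm1 : 1 < m := by
      refine (Subgroup.one_lt_card_iff_ne_bot _).mpr ?_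
      intro h
      apply hx1
      rw [h, Subgroup.mem_bot] at hxA
      exact hxA
    -- every element outside K lies in a conjugate of A
    have hcover : ∀ y : G, y ∉ K → ∃ g : G, y ∈ MulAut.conj g • A := by
      intro y hyK
      have hpex : ∃ p ∈ m.primeFactors, p ∣ orderOf y := by
        by_contra h
        push_neg at h
        exact hyK (hKmem y h)
      obtain ⟨p, hpmem, hpord⟩ := hpex
      have hp : p.Prime := Nat.prime_of_mem_primeFactors hpmem
      haveI : Fact p.Prime := ⟨hp⟩
      have hordy : orderOf y ≠ 0 := (orderOf_pos y).ne'
      set t := y ^ (orderOf y / p ^ (orderOf y).factorization p) with ht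
      have hv : 0 < (orderOf y).factorization p :=
        hp.factorization_pos_of_dvd hordy hpord
      have hordt : orderOf t = p ^ (orderOf y).factorization p := by
        rw [ht, orderOf_pow, Nat.gcd_eq_right (Nat.ordCompl_dvd (orderOf y) p),
          Nat.div_div_self (Nat.ordProj_dvd (orderOf y) p) hordy]
      have ht1 : t ≠ 1 := by
        intro h
        rw [h, orderOf_one] at hordt
        exact (Nat.one_lt_pow hv.ne' hp.one_lt).ne' hordt.symm
      have hzt : IsPGroup p (Subgroup.zpowers t) :=
        IsPGroup.of_card (by rw [Nat.card_zpowers, hordt])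
      obtain ⟨Pt, htPt⟩ := hzt.exists_le_sylow
      obtain ⟨⟨P₀, hP₀A⟩, -⟩ := hstep p hp (Nat.dvd_of_mem_primeFactors hpmem)
      obtain ⟨g, hg⟩ := MulAction.exists_smul_eq G P₀ Pt
      have htg : t ∈ MulAut.conj g • A := by
        have h1 : t ∈ (Pt : Subgroup G) := htPt (Subgroup.mem_zpowers t)
        rw [← hg] at h1
        have h2 : ((g • P₀ : Sylow p G) : Subgroup G)
            = MulAut.conj g • (P₀ : Subgroup G) := Sylow.coe_subgroup_smul
        rw [h2] at h1
        exact (Subgroup.pointwise_smul_le_pointwise_smul_iff.mpr hP₀A) h1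
      set a := g⁻¹ * t * g with ha
      have haA : a ∈ A := by
        have h3 := Subgroup.mem_pointwise_smul_iff_inv_smul_mem.mp htg
        simpa [ha, MulAut.smul_def, mul_assoc] using h3
      have ha1 : a ≠ 1 := by
        intro h
        apply ht1
        have h4 : t = g * a * g⁻¹ := by rw [ha]; group
        rw [h4, h]
        group
      have hcent : Subgroup.centralizer {t} = MulAut.conj g • A := by
        have h5 := hCentConj g a haA ha1
        have h4 : g * a * g⁻¹ = t := by rw [ha]; group
        rwa [h4] at h5
      have hyct : y ∈ Subgroup.centralizer {t} := by
        rw [Subgroup.mem_centralizer_singleton_iff]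
        exact ((Commute.refl y).pow_right _).eq
      exact ⟨g, hcent ▸ hyct⟩
    -- Sylow subgroup of K and the Frattini argument
    have hKcard1 : 1 < Nat.card K := (Subgroup.one_lt_card_iff_ne_bot _).mpr hKbot
    set q := (Nat.card K).minFac with hqdef
    have hqp : q.Prime := Nat.minFac_prime (by omega)
    haveI : Fact q.Prime := ⟨hqp⟩
    obtain ⟨QK⟩ : Nonempty (Sylow q ↥K) := inferInstance
    set QG : Subgroup G := (QK : Subgroup ↥K).map K.subtype with hQGdef
    have hQGK : QG ≤ K := by
      rintro y ⟨⟨z, hzK⟩, -, rfl⟩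
      exact hzK
    have hQGcard : Nat.card QG = Nat.card QK :=
      (Nat.card_congr (Subgroup.equivMapOfInjective _ K.subtype
        K.subtype_injective).toEquiv).symm
    have hQG1 : ∃ a ∈ QG, a ≠ 1 := by
      rcases QG.bot_or_exists_ne_one with h | h
      · exfalso
        have h1 : Nat.card QK = q ^ (Nat.card ↥K).factorization q :=
          QK.card_eq_multiplicity
        have h2 : 0 < (Nat.card ↥K).factorization q :=
          hqp.factorization_pos_of_dvd (by omega) (Nat.minFac_dvd _)
        have h3 : Nat.card QG = 1 := by rw [h, Subgroup.card_bot]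
        rw [hQGcard, h1] at h3
        have := Nat.one_lt_pow h2.ne' hqp.one_lt
        omega
      · exact h
    have hQGlt : Nat.card QG < Nat.card K := by
      rcases lt_or_eq_of_le (Subgroup.card_le_of_le hQGK) with h | h
      · exact h
      · exfalso
        apply hKns
        have hKtop : ((QK : Subgroup ↥K)) = ⊤ := by
          apply Subgroup.eq_top_of_card_eq
          rw [← hQGcard, h]
        have hPK : IsPGroup q ↥K := by
          have h6 := QK.isPGroup'
          rw [hKtop] at h6
          exact h6.of_equiv Subgroup.topEquiv
        haveI := hPK.isNilpotent
        infer_instance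
    have hFrat : Subgroup.normalizer (QG : Set G) ⊔ K = ⊤ := Sylow.normalizer_sup_eq_top QK
    set Hn := Subgroup.normalizer (QG : Set G) with hHn
    haveI hKHn : (K.subgroupOf Hn).Normal := hKnormal.subgroupOf Hn
    have hrel : (K.subgroupOf Hn).index = m := by
      have h1 : K.relIndex Hn = K.index := by
        rw [← Subgroup.relIndex_sup_right, hFrat, Subgroup.relIndex_top_right]
      rw [show (K.subgroupOf Hn).index = K.relIndex Hn from rfl, h1, hKidx]
    have hcards : Nat.card (K.subgroupOf Hn) ∣ Nat.card K := by
      have h2 : (K.subgroupOf Hn).map Hn.subtype ≤ K := by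
        rintro y ⟨⟨z, hz⟩, hz2, rfl⟩
        exact hz2
      calc Nat.card (K.subgroupOf Hn)
          = Nat.card ((K.subgroupOf Hn).map Hn.subtype) :=
            Nat.card_congr (Subgroup.equivMapOfInjective _ Hn.subtype
              Hn.subtype_injective).toEquiv
        _ ∣ Nat.card K := Subgroup.card_dvd_of_le h2
    have hcoprime : Nat.Coprime (Nat.card (K.subgroupOf Hn)) (K.subgroupOf Hn).index := by
      rw [hrel]
      exact Nat.Coprime.coprime_dvd_left hcards hcKm
    obtain ⟨C', hC'⟩ := Subgroup.exists_right_complement'_of_coprime hcoprime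
    have hcardC' : Nat.card C' = m := by
      have h1 := hC'.card_mul
      have h2 := Subgroup.card_mul_index (K.subgroupOf Hn)
      rw [hrel] at h2
      have h3 : 0 < Nat.card (K.subgroupOf Hn) := Nat.card_pos
      have h4 : Nat.card (K.subgroupOf Hn) * Nat.card C'
          = Nat.card (K.subgroupOf Hn) * m := by rw [h1, h2]
      exact Nat.eq_of_mul_eq_mul_left h3 h4
    set φ : ↥Hn →* G ⧸ K := (QuotientGroup.mk' K).comp Hn.subtype with hφ
    set ψ : ↥C' →* G ⧸ K := φ.comp C'.subtype with hψ
    have hψinj : Function.Injective ψ := by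
      rw [← MonoidHom.ker_eq_bot_iff, eq_bot_iff]
      intro c hc
      have h1 : ((c : ↥Hn) : G) ∈ K := (QuotientGroup.eq_one_iff _).mp hc
      have h4 : (c : ↥Hn) ∈ (K.subgroupOf Hn) ⊓ C' := ⟨h1, c.2⟩
      have h5 : (c : ↥Hn) = 1 := by
        have h6 := hC'.disjoint.le_bot h4
        rwa [Subgroup.mem_bot] at h6
      rw [Subgroup.mem_bot]
      exact Subtype.ext h5
    have hrange : ψ.range = ⊤ := by
      apply Subgroup.eq_top_of_card_eq
      have h1 : Nat.card ψ.range = Nat.card C' :=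
        (Nat.card_congr (MonoidHom.ofInjective hψinj).toEquiv).symm
      rw [h1, hcardC', ← Subgroup.index_eq_card, hKidx]
    obtain ⟨u', hu'⟩ : ∃ u' : ↥C', ψ u' = ((x : G ⧸ K)) := by
      have h1 : ((x : G ⧸ K)) ∈ ψ.range := hrange ▸ Subgroup.mem_top _
      exact MonoidHom.mem_range.mp h1
    set u : G := ((u' : ↥Hn) : G) with hu
    have humem : u ∈ Hn := (u' : ↥Hn).2
    have hmku : ((u : G ⧸ K)) = ((x : G ⧸ K)) := hu'
    have hordmkx : orderOf ((x : G ⧸ K)) = m := by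
      rw [← Nat.card_zpowers, hQtop, Subgroup.card_top, ← Subgroup.index_eq_card, hKidx]
    have huK : u ∉ K := by
      intro h
      have h1 : ((u : G ⧸ K)) = 1 := (QuotientGroup.eq_one_iff u).mpr h
      rw [hmku] at h1
      rw [h1, orderOf_one] at hordmkx
      omega
    obtain ⟨g, hum⟩ := hcover u huK
    have hordu : orderOf u = m := by
      have h1 : m ∣ orderOf u := by
        rw [← hordmkx, ← hmku]
        exact orderOf_map_dvd (QuotientGroup.mk' K) u
      have h2 : orderOf u ∣ m := by
        have h3 := Subgroup.orderOf_dvd_natCard _ hum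
        rwa [conj_card_eq] at h3
      exact Nat.dvd_antisymm h2 h1
    have hzu : Subgroup.zpowers u = MulAut.conj g • A := by
      apply Subgroup.eq_of_le_of_card_ge (Subgroup.zpowers_le.mpr hum)
      rw [Nat.card_zpowers, hordu, conj_card_eq]
    set Qs : Subgroup G := MulAut.conj g⁻¹ • QG with hQs
    have hxN : x ∈ Subgroup.normalizer (Qs : Set G) := by
      have h1 : Subgroup.zpowers u ≤ Hn := Subgroup.zpowers_le.mpr humem
      have h2 : MulAut.conj g⁻¹ • Subgroup.zpowers u ≤ MulAut.conj g⁻¹ • Hn :=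
        Subgroup.pointwise_smul_le_pointwise_smul_iff.mpr h1
      rw [hzu] at h2
      have h3 : MulAut.conj g⁻¹ • (MulAut.conj g • A) = A := by
        rw [smul_smul, ← map_mul]
        simp
      have h4 : MulAut.conj g⁻¹ • Hn = Subgroup.normalizer (Qs : Set G) := by
        rw [hHn, hQs, conj_normalizer_eq]
      rw [h3, h4] at h2
      exact h2 hxA
    have hQsK : Qs ≤ K := by
      rw [hQs]
      calc MulAut.conj g⁻¹ • QG ≤ MulAut.conj g⁻¹ • K :=
            Subgroup.pointwise_smul_le_pointwise_smul_iff.mpr hQGK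
        _ = K := Subgroup.Normal.conj_smul_eq_self g⁻¹ K
    have hQscard : Nat.card Qs = Nat.card QG := conj_card_eq _ _
    obtain ⟨ks, hksQs, hks1⟩ : ∃ a ∈ Qs, a ≠ 1 := by
      rcases Qs.bot_or_exists_ne_one with h | h
      · exfalso
        obtain ⟨a0, ha0, ha01⟩ := hQG1
        have h2 : Nat.card Qs = 1 := by rw [h, Subgroup.card_bot]
        rw [hQscard] at h2
        have h3 : QG = ⊥ := Subgroup.card_eq_one.mp h2
        rw [h3, Subgroup.mem_bot] at ha0
        exact ha01 ha0
      · exact h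
    have hksK : ks ∈ K := hQsK hksQs
    have hksA : ks ∉ A := fun h => hks1 (hKA ks hksK h)
    have hNtop : Subgroup.normalizer (Qs : Set G) = ⊤ := by
      rw [← top_le_iff, ← htop ks hksA, Subgroup.closure_le]
      rintro a (rfl | ha)
      · exact hxN
      · rw [Set.mem_singleton_iff] at ha; subst ha
        exact Subgroup.le_normalizer hksQs
    haveI hQsnormal : Qs.Normal := Subgroup.normalizer_eq_top_iff.mp hNtop
    have hKQs : K ≤ Qs := by
      intro k hkK
      have h1 : Qs ⊔ Subgroup.zpowers x = ⊤ := by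
        rw [← top_le_iff, ← htop ks hksA, Subgroup.closure_le]
        rintro a (rfl | ha)
        · exact Subgroup.mem_sup_right (Subgroup.mem_zpowers a)
        · rw [Set.mem_singleton_iff] at ha; subst ha
          exact Subgroup.mem_sup_left hksQs
      have h2 : k ∈ (↑(Qs ⊔ Subgroup.zpowers x) : Set G) := by
        rw [h1]
        trivial
      rw [Subgroup.normal_mul] at h2
      obtain ⟨s, hs, w, hw, rfl⟩ := h2
      have hwA : w ∈ A := (Subgroup.zpowers_le.mpr hxA) hw
      have hwK : w ∈ K := by
        have h3 : w = s⁻¹ * (s * w) := by group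
        rw [h3]
        exact K.mul_mem (K.inv_mem (hQsK hs)) hkK
      have hw1 : w = 1 := hKA w hwK hwA
      simpa [hw1] using hs
    have hfin : Nat.card K ≤ Nat.card Qs := Subgroup.card_le_of_le hKQs
    rw [hQscard] at hfin
    omega
end Main

theorem abelian_of_solubilizer_pairwise_commute
    {G : Type*} [Group G] [Finite G]
    (h : ∃ x : G, ∀ y ∈ solubilizer x, ∀ z ∈ solubilizer x, y * z = z * y) :
    ∀ a b : G, a * b = b * a :=
  fun a b => key (Nat.card G) G inferInstance inferInstance le_rfl h a b
end

section
/- Let G be a finite insoluble (non-solvable) group and x ∈ G. Then the cardinality of Sol_G(x) is not equal to p² for any prime p. -/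
open Subgroup

namespace SolubilizerAux

variable {G : Type*} [Group G] {x : G}

lemma isSolvable_of_le {S T : Subgroup G} (h : T ≤ S) (hS : IsSolvable S) : IsSolvable T := by
  haveI : Group.IsSolvable S := hS
  exact solvable_of_solvable_injective (Subgroup.inclusion_injective h)

lemma subset_sol {S : Subgroup G} (hS : IsSolvable S) (hxS : x ∈ S) :
    (S : Set G) ⊆ solubilizer x := by
  intro y hy
  refine isSolvable_of_le ?_ hS
  rw [Subgroup.closure_le, Set.insert_subset_iff, Set.singleton_subset_iff]
  exact ⟨hxS, hy⟩

lemma zpowers_isSolvable (g : G) : IsSolvable (Subgroup.zpowers g) := by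
  refine isSolvable_of_comm ?_
  rintro ⟨a, m, rfl⟩ ⟨b, n, rfl⟩
  ext
  simp [← zpow_add, add_comm]

lemma one_mem_sol : (1 : G) ∈ solubilizer x :=
  subset_sol (zpowers_isSolvable x) (mem_zpowers x) (one_mem _)

lemma mul_mem_sol {y h : G} (hy : y ∈ solubilizer x) (hh : h ∈ Subgroup.zpowers x) :
    y * h ∈ solubilizer x := by
  have hy' : IsSolvable (Subgroup.closure {x, y}) := hy
  refine isSolvable_of_le ?_ hy'
  rw [Subgroup.closure_le, Set.insert_subset_iff, Set.singleton_subset_iff]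
  refine ⟨Subgroup.subset_closure (Set.mem_insert _ _), ?_⟩
  refine mul_mem (Subgroup.subset_closure (Set.mem_insert_of_mem _ rfl)) ?_
  have hle : Subgroup.zpowers x ≤ Subgroup.closure {x, y} := by
    rw [Subgroup.zpowers_le]
    exact Subgroup.subset_closure (Set.mem_insert _ _)
  exact hle hh

/-- If a set `S` is invariant under right multiplication by a subgroup `H`, then
`|S| = |image of S in G/H| * |H|`. -/
lemma card_eq_card_image_mul_card [Finite G] (H : Subgroup G) (S : Set G)
    (hS : ∀ y ∈ S, ∀ h ∈ H, y * h ∈ S) :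
    Nat.card S = Nat.card (QuotientGroup.mk (s := H) '' S : Set (G ⧸ H)) * Nat.card H := by
  classical
  have key : ∀ q : G ⧸ H, q ∈ QuotientGroup.mk (s := H) '' S → q.out ∈ S := by
    rintro q ⟨y, hy, rfl⟩
    have h1 : (QuotientGroup.mk y : G ⧸ H) = QuotientGroup.mk (QuotientGroup.mk (s := H) y).out :=
      (QuotientGroup.out_eq' _).symm
    have h2 : y⁻¹ * (QuotientGroup.mk (s := H) y).out ∈ H := QuotientGroup.eq.mp h1
    have := hS y hy _ h2
    rwa [mul_inv_cancel_left] at this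
  have e : (QuotientGroup.mk (s := H) '' S : Set (G ⧸ H)) × H ≃ S := by
    refine ⟨fun qh => ⟨qh.1.1.out * qh.2.1, hS _ (key _ qh.1.2) _ qh.2.2⟩, fun y =>
      ⟨⟨QuotientGroup.mk y.1, ⟨y.1, y.2, rfl⟩⟩,
       ⟨(QuotientGroup.mk (s := H) y.1).out⁻¹ * y.1, QuotientGroup.eq.mp
         (QuotientGroup.out_eq' _)⟩⟩, ?_, ?_⟩
    · rintro ⟨⟨q, hq⟩, ⟨h, hh⟩⟩
      have hmk : QuotientGroup.mk (s := H) (q.out * h) = q := by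
        rw [QuotientGroup.mk_mul_of_mem _ hh, QuotientGroup.out_eq']
      ext
      · simp [hmk]
      · simp [hmk]
    · rintro ⟨y, hy⟩
      simp
  rw [← Nat.card_congr e, Nat.card_prod]

/-- If `g` normalizes a solvable subgroup `S`, then `S ⊔ ⟨g⟩` is solvable. -/
lemma solvable_sup_zpowers {S : Subgroup G} (hS : IsSolvable S) {g : G}
    (hg : g ∈ Subgroup.normalizer (S : Set G)) : IsSolvable ↥(S ⊔ zpowers g) := by
  set T := S ⊔ zpowers g with hT
  have hTN : T ≤ Subgroup.normalizer (S : Set G) := sup_le S.le_normalizer (by rwa [zpowers_le])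
  haveI hN : (S.subgroupOf T).Normal := by
    rw [normal_subgroupOf_iff le_sup_left]
    intro h k hh hk
    exact (mem_normalizer_iff.mp (hTN hk) h).mp hh
  set g' : T := ⟨g, Subgroup.mem_sup_right (mem_zpowers g)⟩
  set π := QuotientGroup.mk' (S.subgroupOf T)
  have hEq : Subgroup.closure ((S : Set G) ∪ (zpowers g : Set G)) = T := by
    rw [Subgroup.closure_union, Subgroup.closure_eq, Subgroup.closure_eq]
  haveI hQ : Group.IsSolvable (T ⧸ S.subgroupOf T) := by
    have htop : ∀ t : T, π t ∈ zpowers (π g') := by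
      intro t
      obtain ⟨w, hw⟩ := t
      have hw' : w ∈ closure ((S : Set G) ∪ (zpowers g : Set G)) := hEq.symm ▸ hw
      revert hw
      refine Subgroup.closure_induction (k := (S : Set G) ∪ (zpowers g : Set G))
        (p := fun w _ => ∀ hw : w ∈ T, π ⟨w, hw⟩ ∈ zpowers (π g')) ?_ ?_ ?_ ?_ hw'
      · rintro w (hwS | hwg) hw
        · have : (⟨w, hw⟩ : T) ∈ S.subgroupOf T := hwS
          rw [← QuotientGroup.ker_mk' (S.subgroupOf T)] at this
          rw [show π ⟨w, hw⟩ = 1 from this]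
          exact one_mem _
        · obtain ⟨n, rfl⟩ := hwg
          have : (⟨g ^ n, hw⟩ : T) = g' ^ n := by ext; simp [g']
          rw [this, map_zpow]
          exact zpow_mem (mem_zpowers _) n
      · intro hw
        rw [show (⟨1, hw⟩ : T) = 1 from rfl, map_one]; exact one_mem _
      · intro a b ha hb hA hB hw
        have haT : a ∈ T := hEq ▸ ha
        have hbT : b ∈ T := hEq ▸ hb
        have : (⟨a * b, hw⟩ : T) = ⟨a, haT⟩ * ⟨b, hbT⟩ := rfl
        rw [this, map_mul]
        exact mul_mem (hA haT) (hB hbT)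
      · intro a ha hA hw
        have haT : a ∈ T := hEq ▸ ha
        have : (⟨a⁻¹, hw⟩ : T) = (⟨a, haT⟩)⁻¹ := rfl
        rw [this, map_inv]
        exact inv_mem (hA haT)
    refine isSolvable_of_comm ?_
    intro a b
    obtain ⟨a', rfl⟩ := QuotientGroup.mk'_surjective (S.subgroupOf T) a
    obtain ⟨b', rfl⟩ := QuotientGroup.mk'_surjective (S.subgroupOf T) b
    obtain ⟨m, hm⟩ := htop a'
    obtain ⟨n, hn⟩ := htop b'
    show π a' * π b' = π b' * π a'
    rw [← hm, ← hn, ← zpow_add, ← zpow_add, add_comm]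
  haveI hS' : Group.IsSolvable ↥(S.subgroupOf T) := by
    haveI : Group.IsSolvable S := hS
    exact solvable_of_solvable_injective
      (f := (Subgroup.subgroupOfEquivOfLe (le_sup_left : S ≤ T)).toMonoidHom)
      (MulEquiv.injective (Subgroup.subgroupOfEquivOfLe (le_sup_left : S ≤ T)))
  exact solvable_of_ker_le_range (S.subgroupOf T).subtype π
    (by rw [QuotientGroup.ker_mk', Subgroup.range_subtype])

lemma normalizer_subset_sol {S : Subgroup G} (hS : IsSolvable S) (hxS : x ∈ S) :
    (Subgroup.normalizer (S : Set G) : Set G) ⊆ solubilizer x := by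
  intro y hy
  exact subset_sol (solvable_sup_zpowers hS hy) (Subgroup.mem_sup_left hxS)
    (Subgroup.mem_sup_right (mem_zpowers y))

lemma conj_mem_sol {y g : G} (hy : y ∈ solubilizer x) (hg : g * x * g⁻¹ = x) :
    g * y * g⁻¹ ∈ solubilizer x := by
  have hy' : IsSolvable (Subgroup.closure {x, y}) := hy
  show IsSolvable (Subgroup.closure {x, g * y * g⁻¹})
  have hmap : Subgroup.closure {x, g * y * g⁻¹}
      = (Subgroup.closure {x, y}).map (MulAut.conj g).toMonoidHom := by
    rw [MonoidHom.map_closure]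
    congr 1
    rw [Set.image_pair]
    simp only [MulEquiv.coe_toMonoidHom, MulAut.conj_apply, hg]
  rw [hmap]
  haveI : Group.IsSolvable (Subgroup.closure {x, y}) := hy'
  exact solvable_of_solvable_injective
    (f := ((Subgroup.closure {x, y}).equivMapOfInjective (MulAut.conj g).toMonoidHom
      (MulAut.conj g).injective).symm.toMonoidHom)
    (MulEquiv.injective _)

lemma mem_normalizer_zpowers_of_conj [Finite G] (hx : x ≠ 1) {y : G}
    (h : y⁻¹ * x * y ∈ zpowers x) : y ∈ Subgroup.normalizer (zpowers x : Set G) := by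
  have hcard : Nat.card (zpowers (y⁻¹ * x * y)) = Nat.card (zpowers x) := by
    rw [Nat.card_zpowers, Nat.card_zpowers]
    exact (SemiconjBy.orderOf_eq y⁻¹ (by show y⁻¹ * x = (y⁻¹ * x * y) * y⁻¹; group)).symm
  have hle : zpowers (y⁻¹ * x * y) ≤ zpowers x := by rwa [zpowers_le]
  have heq : zpowers (y⁻¹ * x * y) = zpowers x :=
    Subgroup.eq_of_le_of_card_ge hle hcard.ge
  have hconj : ∀ n : ℤ, (y⁻¹ * x * y) ^ n = y⁻¹ * x ^ n * y := by
    intro n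
    have := conj_zpow (i := n) (a := y⁻¹) (b := x)
    rwa [inv_inv] at this
  rw [mem_normalizer_iff]
  intro w
  constructor
  · intro hw
    rw [← heq] at hw
    obtain ⟨n, hn⟩ := hw
    simp only at hn
    refine ⟨n, ?_⟩
    rw [← hn, hconj]
    group
  · intro hw
    obtain ⟨n, hn⟩ := hw
    simp only at hn
    rw [← heq]
    refine ⟨n, ?_⟩
    simp only
    rw [hconj, hn]
    group



open scoped Pointwise

lemma conj_x_eq (h : zpowers x) : (h : G) * x * (h : G)⁻¹ = x := by
  obtain ⟨h, n, rfl⟩ := h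
  simp only
  rw [mul_inv_eq_iff_eq_mul]
  exact ((Commute.refl x).zpow_left n).eq

/-- Conjugation by elements of `⟨x⟩` on the coset space `G ⧸ ⟨x⟩`. -/
def conjSmulQuot (x : G) (h : zpowers x) (q : G ⧸ zpowers x) : G ⧸ zpowers x :=
  Quotient.map' (fun y => (h : G) * y * (h : G)⁻¹)
    (fun a b hab => by
      rw [QuotientGroup.leftRel_apply] at hab ⊢
      have hrw : ((h:G) * a * (h:G)⁻¹)⁻¹ * ((h:G) * b * (h:G)⁻¹)
          = (h:G) * (a⁻¹ * b) * (h:G)⁻¹ := by group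
      rw [hrw]
      exact mul_mem (mul_mem h.2 hab) (inv_mem h.2)) q

lemma conjSmulQuot_mk (h : zpowers x) (y : G) :
    conjSmulQuot x h (QuotientGroup.mk y) = QuotientGroup.mk ((h : G) * y * (h : G)⁻¹) := rfl

variable (x) in
/-- The image of the solubilizer in the coset space. -/
def solQuotSet : Set (G ⧸ zpowers x) := QuotientGroup.mk '' solubilizer x

instance solQuotAction (x : G) : MulAction (zpowers x) (solQuotSet x) where
  smul h q := ⟨conjSmulQuot x h q.1, by
    obtain ⟨q, hq⟩ := q
    obtain ⟨y, hy, rfl⟩ := hq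
    exact ⟨(h : G) * y * (h : G)⁻¹, conj_mem_sol hy (conj_x_eq h), rfl⟩⟩
  one_smul := by
    rintro ⟨q, hq⟩
    refine Subtype.ext ?_
    show conjSmulQuot x 1 q = q
    induction q using Quotient.inductionOn' with
    | h y =>
      show conjSmulQuot x 1 (QuotientGroup.mk y) = QuotientGroup.mk y
      rw [conjSmulQuot_mk]
      congr 1
      simp
  mul_smul := by
    rintro g h ⟨q, hq⟩
    refine Subtype.ext ?_
    show conjSmulQuot x (g * h) q = conjSmulQuot x g (conjSmulQuot x h q)
    induction q using Quotient.inductionOn' with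
    | h y =>
      show conjSmulQuot x (g * h) (QuotientGroup.mk y) = conjSmulQuot x g
        (conjSmulQuot x h (QuotientGroup.mk y))
      rw [conjSmulQuot_mk, conjSmulQuot_mk, conjSmulQuot_mk]
      congr 1
      push_cast
      group

lemma smul_solQuot_coe (h : zpowers x) (q : solQuotSet x) :
    (h • q : solQuotSet x).1 = conjSmulQuot x h q.1 := rfl

end SolubilizerAux

open scoped Pointwise
open SolubilizerAux MulAction

theorem card_solubilizer_ne_prime_sq_of_not_solvable
    {G : Type*} [Group G] [Finite G] (hG : ¬ IsSolvable G) (x : G) :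
    ∀ p : ℕ, p.Prime → Nat.card (solubilizer x) ≠ p ^ 2 := by
  classical
  intro p hp hcard
  haveI : Fact p.Prime := ⟨hp⟩
  by_cases hx1 : x = 1
  · subst hx1
    have huniv : solubilizer (1 : G) = Set.univ := by
      ext y
      simp only [Set.mem_univ, iff_true]
      exact subset_sol (zpowers_isSolvable y) (one_mem _) (mem_zpowers y)
    rw [huniv] at hcard
    have hcardG : Nat.card G = p ^ 2 := by
      rw [← hcard]
      exact (Nat.card_congr (Equiv.Set.univ G)).symm
    exact hG (isSolvable_of_comm (IsPGroup.commutative_of_card_eq_prime_sq hcardG))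
  have hmulH := card_eq_card_image_mul_card (zpowers x) (solubilizer x)
    (fun y hy h hh => mul_mem_sol hy hh)
  rw [hcard] at hmulH
  have hHdvd : Nat.card (zpowers x) ∣ p ^ 2 := Dvd.intro_left _ hmulH.symm
  have hHne1 : Nat.card (zpowers x) ≠ 1 := by
    rw [Nat.card_zpowers]
    simpa [orderOf_eq_one_iff] using hx1
  have hpH : p ∣ Nat.card (zpowers x) := by
    obtain ⟨i, hi, hcardH⟩ := (Nat.dvd_prime_pow hp).mp hHdvd
    interval_cases i
    · rw [pow_zero] at hcardH; exact absurd hcardH hHne1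
    · rw [hcardH, pow_one]
    · rw [hcardH]; exact dvd_pow_self p two_ne_zero
  have hHpgroup : IsPGroup p (zpowers x) := by
    obtain ⟨i, _, hcardH⟩ := (Nat.dvd_prime_pow hp).mp hHdvd
    exact IsPGroup.of_card hcardH
  obtain ⟨P, hHP⟩ := hHpgroup.exists_le_sylow
  haveI hPsolv : Group.IsSolvable ↥(P : Subgroup G) := by
    haveI := P.isPGroup'.isNilpotent
    infer_instance
  have hxP : x ∈ (P : Subgroup G) := hHP (mem_zpowers x)
  have hPsub : ((P : Subgroup G) : Set G) ⊆ solubilizer x := subset_sol hPsolv hxP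
  have hsolncard : (solubilizer x).ncard = p ^ 2 := by
    rw [← Nat.card_coe_set_eq, hcard]
  have hPle : Nat.card ↥(P : Subgroup G) ≤ p ^ 2 := by
    rw [show Nat.card ↥(P : Subgroup G)
        = (((P : Subgroup G) : Set G)).ncard from Nat.card_coe_set_eq _, ← hsolncard]
    exact Set.ncard_le_ncard hPsub (Set.toFinite _)
  have hcardP := P.card_eq_multiplicity
  have hk2 : (Nat.card G).factorization p ≤ 2 := by
    rw [hcardP] at hPle
    exact (Nat.pow_le_pow_iff_right hp.one_lt).mp hPle
  have hk1 : 1 ≤ (Nat.card G).factorization p := by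
    have h1 : Nat.card (zpowers x) ∣ Nat.card ↥(P : Subgroup G) :=
      Subgroup.card_dvd_of_le hHP
    rw [hcardP] at h1
    by_contra hcon
    push_neg at hcon
    have h0 : (Nat.card G).factorization p = 0 := by omega
    rw [h0, pow_zero, Nat.dvd_one] at h1
    exact hHne1 h1
  have hksplit : (Nat.card G).factorization p = 1 ∨ (Nat.card G).factorization p = 2 := by
    omega
  rcases hksplit with hk | hk
  -- Case: Sylow p-subgroup has order p
  · rw [hk, pow_one] at hcardP
    have hcardH : Nat.card (zpowers x) = p := by
      have h1 : Nat.card (zpowers x) ∣ Nat.card ↥(P : Subgroup G) :=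
        Subgroup.card_dvd_of_le hHP
      rw [hcardP] at h1
      exact Nat.dvd_antisymm h1 hpH
    have hp2ndvd : ¬ (p ^ 2 ∣ Nat.card G) := by
      intro hdvd
      have h2 := (Nat.Prime.pow_dvd_iff_le_factorization hp Nat.card_pos.ne').mp hdvd
      omega
    have hXcard : Nat.card ↥(solQuotSet x) = p := by
      have h3 : Nat.card ↥(solQuotSet x) * Nat.card ↥(zpowers x) = p * p := by
        rw [← pow_two]
        exact hmulH.symm
      rw [hcardH] at h3
      exact Nat.eq_of_mul_eq_mul_right hp.pos h3
    have hmod := hHpgroup.card_modEq_card_fixedPoints (↥(solQuotSet x))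
    have honemem : (⟨QuotientGroup.mk 1, ⟨1, one_mem_sol, rfl⟩⟩ : ↥(solQuotSet x))
        ∈ fixedPoints (zpowers x) ↥(solQuotSet x) := by
      rw [mem_fixedPoints]
      intro h
      refine Subtype.ext ?_
      rw [smul_solQuot_coe]
      show conjSmulQuot x h (QuotientGroup.mk 1) = QuotientGroup.mk 1
      rw [conjSmulQuot_mk]
      congr 1
      simp
    haveI : Nonempty ↥(fixedPoints (zpowers x) ↥(solQuotSet x)) := ⟨⟨_, honemem⟩⟩
    have hfixpos : 0 < Nat.card ↥(fixedPoints (zpowers x) ↥(solQuotSet x)) := Nat.card_pos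
    have hpdvdfix : p ∣ Nat.card ↥(fixedPoints (zpowers x) ↥(solQuotSet x)) := by
      rw [hXcard] at hmod
      exact (Nat.modEq_zero_iff_dvd).mp ((hmod.symm).trans (Nat.modEq_zero_iff_dvd.mpr dvd_rfl))
    have hfixle : Nat.card ↥(fixedPoints (zpowers x) ↥(solQuotSet x)) ≤ p := by
      rw [← hXcard]
      exact Finite.card_subtype_le _
    have hfixeq : Nat.card ↥(fixedPoints (zpowers x) ↥(solQuotSet x)) = p :=
      le_antisymm hfixle (Nat.le_of_dvd hfixpos hpdvdfix)
    have hall : fixedPoints (zpowers x) ↥(solQuotSet x) = Set.univ := by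
      apply Set.eq_of_subset_of_ncard_le (Set.subset_univ _)
      rw [Set.ncard_univ, ← Nat.card_coe_set_eq, hfixeq, hXcard]
    have hsolnorm : solubilizer x ⊆ (Subgroup.normalizer (zpowers x : Set G) : Set G) := by
      intro y hy
      have hyX : (⟨QuotientGroup.mk y, ⟨y, hy, rfl⟩⟩ : ↥(solQuotSet x))
          ∈ fixedPoints (zpowers x) ↥(solQuotSet x) := by
        rw [hall]; trivial
      have h4 := (mem_fixedPoints.mp hyX) ⟨x, mem_zpowers x⟩
      have h5 := congrArg Subtype.val h4
      rw [smul_solQuot_coe] at h5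
      have h6 : conjSmulQuot x ⟨x, mem_zpowers x⟩ (QuotientGroup.mk y) = QuotientGroup.mk y := h5
      rw [conjSmulQuot_mk] at h6
      have h7 : (x * y * x⁻¹)⁻¹ * y ∈ zpowers x := QuotientGroup.eq.mp h6
      obtain ⟨n, hn⟩ := h7
      simp only at hn
      apply mem_normalizer_zpowers_of_conj hx1
      have h8 : y⁻¹ * x * y = (x⁻¹ * x ^ n)⁻¹ := by
        rw [hn]
        group
      rw [h8]
      exact inv_mem (mul_mem (inv_mem (mem_zpowers x)) (zpow_mem (mem_zpowers x) n))
    have hnormsub : ((Subgroup.normalizer (zpowers x : Set G) : Subgroup G) : Set G) ⊆ solubilizer x :=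
      normalizer_subset_sol (zpowers_isSolvable x) (mem_zpowers x)
    have hseteq : ((Subgroup.normalizer (zpowers x : Set G) : Subgroup G) : Set G) = solubilizer x :=
      Set.Subset.antisymm hnormsub hsolnorm
    have hncard : Nat.card ↥(Subgroup.normalizer (zpowers x : Set G)) = p ^ 2 := by
      rw [show Nat.card ↥(Subgroup.normalizer (zpowers x : Set G))
          = (((Subgroup.normalizer (zpowers x : Set G) : Subgroup G) : Set G)).ncard from
        Nat.card_coe_set_eq _, hseteq, ← Nat.card_coe_set_eq, hcard]
    exact hp2ndvd (hncard ▸ Subgroup.card_subgroup_dvd_card (Subgroup.normalizer (zpowers x : Set G)))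
  -- Case: Sylow p-subgroup has order p^2
  · rw [hk] at hcardP
    have hset : ((P : Subgroup G) : Set G) = solubilizer x := by
      apply Set.eq_of_subset_of_ncard_le hPsub
      rw [hsolncard, ← hcardP]
      exact (Nat.card_coe_set_eq _).ge
    have hnormcent : Subgroup.normalizer ((P : Subgroup G) : Set G) ≤ centralizer ((P : Subgroup G) : Set G) := by
      intro g hg
      have hgsol : g ∈ solubilizer x := normalizer_subset_sol hPsolv hxP hg
      rw [← hset] at hgsol
      rw [mem_centralizer_iff]
      intro m hm
      have hcomm := IsPGroup.commutative_of_card_eq_prime_sq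
        (G := ↥(P : Subgroup G)) hcardP
      exact Subtype.ext_iff.mp (hcomm ⟨m, hm⟩ ⟨g, hgsol⟩)
    set K := (MonoidHom.transferSylow P hnormcent).ker with hK
    have compl := MonoidHom.ker_transferSylow_isComplement' P hnormcent
    have hpK : ¬ p ∣ Nat.card K := MonoidHom.not_dvd_card_ker_transferSylow P hnormcent
    have hcardKP : Nat.card K * Nat.card ↥(P : Subgroup G) = Nat.card G := compl.card_mul
    have hKnotsolv : ¬ IsSolvable ↥K := by
      intro hKsolv
      have h3 := Subgroup.card_eq_card_quotient_mul_card_subgroup K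
      have hq2 : Nat.card (G ⧸ K) = p ^ 2 := by
        have h4 : Nat.card (G ⧸ K) * Nat.card K = Nat.card ↥(P : Subgroup G) * Nat.card K := by
          rw [← h3, ← hcardKP, mul_comm]
        rw [← hcardP]
        exact Nat.eq_of_mul_eq_mul_right Nat.card_pos h4
      haveI := isSolvable_of_comm (IsPGroup.commutative_of_card_eq_prime_sq hq2)
      haveI : Group.IsSolvable K := hKsolv
      exact hG (solvable_of_ker_le_range K.subtype (QuotientGroup.mk' K)
        (by rw [QuotientGroup.ker_mk', Subgroup.range_subtype]))
    have hKne1 : Nat.card K ≠ 1 := by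
      intro h1
      haveI : Subsingleton ↥K := (Nat.card_eq_one_iff_unique.mp h1).1
      exact hKnotsolv (inferInstanceAs (Group.IsSolvable K))
    obtain ⟨q, hq, hqdvd⟩ := Nat.exists_prime_and_dvd hKne1
    haveI : Fact q.Prime := ⟨hq⟩
    have hqp : p ≠ q := fun h => hpK (h ▸ hqdvd)
    letI actK : MulDistribMulAction ↥(P : Subgroup G) ↥K :=
      MulDistribMulAction.compHom ↥K
        ((MulAut.conjNormal (G := G) (H := K)).comp (P : Subgroup G).subtype)
    have hmod := (P.isPGroup').card_modEq_card_fixedPoints (Sylow q ↥K)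
    have hsylcard : Nat.card (Sylow q ↥K) ∣ Nat.card ↥K :=
      (Sylow.card_dvd_index (default : Sylow q ↥K)).trans (Subgroup.index_dvd_card _)
    have hpfix : ¬ p ∣ Nat.card (Sylow q ↥K) := fun hd => hpK (hd.trans hsylcard)
    have hfixne : Nat.card ↥(fixedPoints ↥(P : Subgroup G) (Sylow q ↥K)) ≠ 0 := by
      intro h0
      rw [h0] at hmod
      exact hpfix (Nat.modEq_zero_iff_dvd.mp hmod)
    obtain ⟨Q, hQfix⟩ : Nonempty ↥(fixedPoints ↥(P : Subgroup G) (Sylow q ↥K)) :=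
      (Nat.card_ne_zero.mp hfixne).1
    set xP : ↥(P : Subgroup G) := ⟨x, hxP⟩ with hxPdef
    have hxQ : xP • Q = Q := (mem_fixedPoints.mp hQfix) xP
    have hsubQ : xP • (Q : Subgroup ↥K) = (Q : Subgroup ↥K) :=
      congrArg (fun s : Sylow q ↥K => (s : Subgroup ↥K)) hxQ
    have hsmulcoe : ∀ (g : ↥(P : Subgroup G)) (k : ↥K),
        ((g • k : ↥K) : G) = (g : G) * k * (g : G)⁻¹ := fun g k => rfl
    have hxnorm : x ∈ Subgroup.normalizer (((Q : Subgroup ↥K).map K.subtype : Subgroup G) : Set G) := by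
      rw [mem_normalizer_iff]
      intro w
      constructor
      · rintro ⟨k, hk, rfl⟩
        refine ⟨xP • k, ?_, hsmulcoe xP k⟩
        have h5 := Subgroup.smul_mem_pointwise_smul k xP _ hk
        rwa [hsubQ] at h5
      · rintro ⟨k, hk, hkw⟩
        have hkw' : (k : G) = x * w * x⁻¹ := hkw
        have hw : w = ((xP⁻¹ • k : ↥K) : G) := by
          rw [hsmulcoe xP⁻¹ k]
          show w = x⁻¹ * (k : G) * x⁻¹⁻¹
          rw [hkw']
          group
        refine ⟨xP⁻¹ • k, ?_, hw.symm⟩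
        have h5 := Subgroup.smul_mem_pointwise_smul k xP⁻¹ _ hk
        rwa [inv_smul_eq_iff.mpr hsubQ.symm] at h5
    haveI hQ'solv : Group.IsSolvable ↥((Q : Subgroup ↥K).map K.subtype) := by
      haveI := ((Q : Sylow q ↥K).isPGroup'.map K.subtype).isNilpotent
      infer_instance
    have hT := solvable_sup_zpowers hQ'solv hxnorm
    have hTsub : (((Q : Subgroup ↥K).map K.subtype ⊔ zpowers x : Subgroup G) : Set G)
        ⊆ solubilizer x := subset_sol hT (Subgroup.mem_sup_right (mem_zpowers x))
    rw [← hset] at hTsub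
    have hTleP : (Q : Subgroup ↥K).map K.subtype ⊔ zpowers x ≤ (P : Subgroup G) :=
      SetLike.coe_subset_coe.mp hTsub
    have hQ'leP : (Q : Subgroup ↥K).map K.subtype ≤ (P : Subgroup G) :=
      le_trans le_sup_left hTleP
    have hdisj : Disjoint (P : Subgroup G) ((Q : Subgroup ↥K).map K.subtype) :=
      IsPGroup.disjoint_of_ne p q hqp _ _ P.isPGroup'
        ((Q : Sylow q ↥K).isPGroup'.map K.subtype)
    have hbot : (Q : Subgroup ↥K).map K.subtype = ⊥ := by
      rw [← le_bot_iff]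
      rw [← disjoint_iff.mp hdisj]
      exact le_inf hQ'leP le_rfl
    have hcardQ : Nat.card ↥(Q : Subgroup ↥K) = 1 := by
      rw [Nat.card_congr ((Subgroup.equivMapOfInjective (Q : Subgroup ↥K) K.subtype
        K.subtype_injective).toEquiv), hbot]
      exact Subgroup.card_bot
    have hcardQ' := (Q : Sylow q ↥K).card_eq_multiplicity
    rw [hcardQ] at hcardQ'
    have hfac : 0 < (Nat.card ↥K).factorization q :=
      Nat.Prime.factorization_pos_of_dvd hq Nat.card_pos.ne' hqdvd
    have hqone : q ∣ 1 := by
      rw [hcardQ']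
      exact dvd_pow_self q hfac.ne'
    exact hq.one_lt.ne' (Nat.eq_one_of_dvd_one hqone)
end

section
/- Let G be a finite group and x ∈ G. Then the order o(x) of the element x divides the cardinality of Sol_G(x). -/
lemma solubilizer_mul_zpow {G : Type*} [Group G] (x y : G) (k : ℤ)
    (hy : y ∈ solubilizer x) : y * x ^ k ∈ solubilizer x := by
  haveI : Group.IsSolvable (Subgroup.closure {x, y}) := hy
  have hxy : Subgroup.closure {x, y * x ^ k} ≤ Subgroup.closure {x, y} := by
    have h1 : x ∈ Subgroup.closure {x, y} := Subgroup.subset_closure (Or.inl rfl)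
    have h2 : y ∈ Subgroup.closure {x, y} := Subgroup.subset_closure (Or.inr rfl)
    refine (Subgroup.closure_le _).2 ?_
    rintro z (rfl | rfl)
    · exact h1
    · exact mul_mem h2 (zpow_mem h1 k)
  exact solvable_of_solvable_injective (Subgroup.inclusion_injective hxy)

theorem orderOf_dvd_card_solubilizer
    {G : Type*} [Group G] [Finite G] (x : G) :
    orderOf x ∣ Nat.card (solubilizer x) := by
  classical
  set H := Subgroup.zpowers x with hH
  have hS : solubilizer x = QuotientGroup.mk ⁻¹' (QuotientGroup.mk '' solubilizer x : Set (G ⧸ H)) := by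
    apply subset_antisymm (Set.subset_preimage_image _ _)
    rintro y ⟨z, hz, hzy⟩
    have : z⁻¹ * y ∈ H := QuotientGroup.eq.mp hzy
    obtain ⟨k, hk⟩ := this
    have hy2 : y = z * x ^ k := by
      calc y = z * (z⁻¹ * y) := by group
        _ = z * x ^ k := by rw [← hk]
    rw [hy2]
    exact solubilizer_mul_zpow x z k hz
  have := Nat.card_congr (QuotientGroup.preimageMkEquivSubgroupProdSet H
    (QuotientGroup.mk '' solubilizer x : Set (G ⧸ H)))
  rw [hS, this, Nat.card_prod, Nat.card_zpowers]
  exact Dvd.intro _ rfl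
end
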